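/- If G is a 3-critical graph, then |E(G)| ≥ (4/3)·|V(G)|. -/

import Mathlib

open SimpleGraph

variable {V : Type*}

/-- `c` is a proper edge coloring of `G` using colors `0, …, n-1`:
every edge gets a color `< n`, and distinct edges sharing an endpoint
receive distinct colors. -/
def IsProperEdgeColoring (G : SimpleGraph V) (n : ℕ) (c : Sym2 V → ℕ) : Prop :=
  (∀ e ∈ G.edgeSet, c e < n) ∧
    ∀ e₁ ∈ G.edgeSet, ∀ e₂ ∈ G.edgeSet, e₁ ≠ e₂ → (∃ v, v ∈ e₁ ∧ v ∈ e₂) →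
      c e₁ ≠ c e₂

/-- The edge chromatic number `χ'(G)`: the least number of colors in a proper
edge coloring of `G`. -/
noncomputable def edgeChromaticNumber (G : SimpleGraph V) : ℕ :=
  sInf {n | ∃ c, IsProperEdgeColoring G n c}

/-- The degree `d_G(v)` of a vertex. -/
noncomputable def deg (G : SimpleGraph V) (v : V) : ℕ := (G.neighborSet v).ncard

/-- The maximum vertex degree `Δ(G)`. -/
noncomputable def maxDeg (G : SimpleGraph V) : ℕ := sSup {d | ∃ v, deg G v = d}

/-- `G` is critical: it is class 2 (i.e. `χ'(G) ≠ Δ(G)`) and every proper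
subgraph `H` of `G` satisfies `χ'(H) < χ'(G)`. -/
def IsCritical (G : SimpleGraph V) : Prop :=
  edgeChromaticNumber G ≠ maxDeg G ∧
    ∀ H : G.Subgraph, H ≠ ⊤ → edgeChromaticNumber H.coe < edgeChromaticNumber G

/-- `G` is `k`-critical: critical with maximum degree `k`. -/
def IsKCritical (G : SimpleGraph V) (k : ℕ) : Prop :=
  IsCritical G ∧ maxDeg G = k

/-!
For an edge `uv` of a critical graph `G`, the graph `G - uv` has a `(χ'(G) - 1)`-edge-coloring,
and no such coloring extends to `uv`; so `u` and `v` have no common missing color, whence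
`deg u + deg v > χ'(G) ≥ 4` for a 3-critical `G`. As deleting an isolated vertex would not
lower `χ'`, all degrees are 2 or 3,
the neighbours of a degree-2 vertex have degree 3, and `χ'(G) = 4` as soon as a degree-2
vertex exists.

A degree-3 vertex `u` has at most one degree-2 neighbour. If `v ≠ v'` were two, take a
3-coloring of `G - uv`; let `γ` be the color of the third edge `uw` and `α` the color missing
at `u`. Kempe's argument puts `v` in the `(α, γ)`-chain of `u`. Moving the color of `uv'` onto
`uv` gives a 3-coloring of `G - uv'` with the same `(α, γ)`-edges, which puts `v'` in that
chain as well. But then a connected graph of maximum degree 2 would have three vertices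
`u, v, v'` of degree at most 1.

Double counting the edges between the `n₂` vertices of degree 2 and the `n₃` of degree 3 gives
`2 n₂ ≤ n₃`, and `2 |E| = 2 n₂ + 3 n₃ ≥ 8 (n₂ + n₃) / 3`.
-/

namespace SimpleGraph

variable {G : SimpleGraph V}

lemma sum_deg_eq_two_mul_ncard_edgeSet [Fintype V] (G : SimpleGraph V) :
    ∑ v, deg G v = 2 * G.edgeSet.ncard := by
  classical
  simp only [deg, Set.ncard_eq_toFinset_card', Set.toFinset_card, card_neighborSet_eq_degree]
  rw [G.sum_degrees_eq_twice_card_edges]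
  simp [edgeFinset]

lemma deg_induce_le [Finite V] {s : Set V} (x : s) : deg (G.induce s) x ≤ deg G x :=
  Set.ncard_le_ncard_of_injOn Subtype.val (fun _ hy => hy) Subtype.val_injective.injOn
    (Set.toFinite _)

lemma Connected.false_of_three_deg_le_one [Finite V] (hG : G.Connected)
    (hdeg : ∀ x, deg G x ≤ 2) {a b c : V} (hab : a ≠ b) (hac : a ≠ c) (hbc : b ≠ c)
    (ha : deg G a ≤ 1) (hb : deg G b ≤ 1) (hc : deg G c ≤ 1) : False := by
  classical
  have := Fintype.ofFinite V
  have hsum :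
      ∑ x, (deg G x + if x ∈ ({a, b, c} : Finset V) then 1 else 0) ≤ ∑ _x : V, 2 := by
    refine Finset.sum_le_sum fun x _ => ?_
    split_ifs with hx
    · simp only [Finset.mem_insert, Finset.mem_singleton] at hx
      rcases hx with rfl | rfl | rfl <;> omega
    · simpa using hdeg x
  rw [Finset.sum_add_distrib, Finset.sum_boole, Finset.filter_mem_eq_inter, Finset.univ_inter,
    Finset.card_insert_of_notMem (by simp [hab, hac]), Finset.card_pair hbc,
    sum_deg_eq_two_mul_ncard_edgeSet, Finset.sum_const, Finset.card_univ, smul_eq_mul] at hsum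
  have hedges := hG.card_vert_le_card_edgeSet_add_one
  rw [Nat.card_eq_fintype_card, Nat.card_coe_set_eq] at hedges
  push_cast at hsum
  omega

lemma false_of_reachable_of_deg_le_one [Finite V] (hdeg : ∀ x, deg G x ≤ 2) {a b c : V}
    (hab : a ≠ b) (hac : a ≠ c) (hbc : b ≠ c) (hba : G.Reachable b a) (hca : G.Reachable c a)
    (ha : deg G a ≤ 1) (hb : deg G b ≤ 1) (hc : deg G c ≤ 1) : False := by
  set C := G.connectedComponentMk a
  have hmem {x : V} (hx : G.Reachable x a) : x ∈ C.supp := ConnectedComponent.sound hx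
  refine C.connected_toSimpleGraph.false_of_three_deg_le_one (a := ⟨a, rfl⟩)
    (b := ⟨b, hmem hba⟩) (c := ⟨c, hmem hca⟩) (fun x => (deg_induce_le x).trans (hdeg x)) ?_ ?_ ?_
    ((deg_induce_le _).trans ha) ((deg_induce_le _).trans hb) ((deg_induce_le _).trans hc)
  all_goals simpa [Subtype.ext_iff]

end SimpleGraph

section EdgeColoring

variable {G G' : SimpleGraph V} {n k : ℕ} {c : Sym2 V → ℕ}

lemma IsProperEdgeColoring.mono (hc : IsProperEdgeColoring G n c) (hnk : n ≤ k) :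
    IsProperEdgeColoring G k c :=
  ⟨fun e he => (hc.1 e he).trans_le hnk, hc.2⟩

lemma IsProperEdgeColoring.anti (hc : IsProperEdgeColoring G n c) (h : G' ≤ G) :
    IsProperEdgeColoring G' n c :=
  ⟨fun e he => hc.1 e (edgeSet_mono h he),
    fun e₁ he₁ e₂ he₂ => hc.2 e₁ (edgeSet_mono h he₁) e₂ (edgeSet_mono h he₂)⟩

lemma IsProperEdgeColoring.color_ne (hc : IsProperEdgeColoring G n c) {x y z : V}
    (hy : G.Adj x y) (hz : G.Adj x z) (hyz : y ≠ z) : c s(x, y) ≠ c s(x, z) :=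
  hc.2 _ hy _ hz (fun h => hyz (Sym2.congr_right.mp h)) ⟨x, Sym2.mem_mk_left _ _,
    Sym2.mem_mk_left _ _⟩

lemma IsProperEdgeColoring.edgeChromaticNumber_le (hc : IsProperEdgeColoring G n c) :
    edgeChromaticNumber G ≤ n :=
  Nat.sInf_le ⟨c, hc⟩

lemma exists_isProperEdgeColoring_edgeChromaticNumber [Finite V] (G : SimpleGraph V) :
    ∃ c, IsProperEdgeColoring G (edgeChromaticNumber G) c := by
  have := Fintype.ofFinite V
  let f := Fintype.equivFin (Sym2 V)
  refine Nat.sInf_mem (s := {n | ∃ c, IsProperEdgeColoring G n c})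
    ⟨Fintype.card (Sym2 V), fun e => f e, fun e _ => (f e).isLt, ?_⟩
  exact fun e₁ _ e₂ _ hne _ h => hne (f.injective (Fin.val_injective h))

lemma IsProperEdgeColoring.deg_le_ncard (hc : IsProperEdgeColoring G n c) {x : V} {S : Set ℕ}
    (hS : S.Finite) (hxS : ∀ y, G.Adj x y → c s(x, y) ∈ S) : deg G x ≤ S.ncard :=
  Set.ncard_le_ncard_of_injOn (fun y => c s(x, y)) hxS
    (fun _ hy _ hz hyz => by_contra fun hne => hc.color_ne hy hz hne hyz) hS

lemma deg_le_edgeChromaticNumber [Finite V] (G : SimpleGraph V) (x : V) :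
    deg G x ≤ edgeChromaticNumber G := by
  obtain ⟨c, hc⟩ := exists_isProperEdgeColoring_edgeChromaticNumber G
  simpa using hc.deg_le_ncard (Set.finite_Iio _) fun y hy => hc.1 _ hy

open Classical in
lemma edgeChromaticNumber_spanningCoe_le [Finite V] (H : G.Subgraph) :
    edgeChromaticNumber H.spanningCoe ≤ edgeChromaticNumber H.coe := by
  obtain ⟨c, hc⟩ := exists_isProperEdgeColoring_edgeChromaticNumber H.coe
  let c' : Sym2 V → ℕ := fun e =>
    if h : ∃ e', Sym2.map Subtype.val e' = e then c h.choose else 0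
  have hinj : Function.Injective (Sym2.map (Subtype.val : H.verts → V)) :=
    Sym2.map.injective Subtype.val_injective
  have hc' (e : Sym2 H.verts) : c' (e.map Subtype.val) = c e := by
    have h : ∃ e', Sym2.map Subtype.val e' = e.map Subtype.val := ⟨e, rfl⟩
    simp only [c', dif_pos h, hinj h.choose_spec]
  have hlift {e : Sym2 V} (he : e ∈ H.spanningCoe.edgeSet) :
      ∃ e' ∈ H.coe.edgeSet, e'.map Subtype.val = e := by
    rwa [Subgraph.edgeSet_spanningCoe, ← Subgraph.image_coe_edgeSet_coe] at he
  refine IsProperEdgeColoring.edgeChromaticNumber_le (c := c') ⟨fun e he => ?_, ?_⟩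
  · obtain ⟨e', he', rfl⟩ := hlift he
    exact hc' e' ▸ hc.1 e' he'
  · rintro _ hf₁ _ hf₂ hne ⟨p, hp₁, hp₂⟩
    obtain ⟨e₁, he₁, rfl⟩ := hlift hf₁
    obtain ⟨e₂, he₂, rfl⟩ := hlift hf₂
    obtain ⟨q₁, hq₁, rfl⟩ := Sym2.mem_map.mp hp₁
    obtain ⟨q₂, hq₂, hq⟩ := Sym2.mem_map.mp hp₂
    rw [hc', hc']
    exact hc.2 e₁ he₁ e₂ he₂ (fun h => hne (h ▸ rfl))
      ⟨q₁, hq₁, Subtype.val_injective hq ▸ hq₂⟩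

end EdgeColoring

lemma deg_le_maxDeg [Finite V] (G : SimpleGraph V) (x : V) : deg G x ≤ maxDeg G :=
  le_csSup (Set.finite_range (deg G)).bddAbove ⟨x, rfl⟩

lemma exists_deg_eq_maxDeg [Finite V] (G : SimpleGraph V) (h : maxDeg G ≠ 0) :
    ∃ x, deg G x = maxDeg G := by
  refine Nat.sSup_mem (s := Set.range (deg G)) ?_ (Set.finite_range _).bddAbove
  by_contra hempty
  exact h ((congrArg sSup (Set.not_nonempty_iff_eq_empty.mp hempty)).trans csSup_empty)

lemma exists_forall_adj_eq_of_deg_eq_one {G : SimpleGraph V} {x : V} (h : deg G x = 1) :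
    ∃ y, ∀ z, G.Adj x z → z = y := by
  obtain ⟨y, hy⟩ := Set.ncard_eq_one.mp h
  refine ⟨y, fun z hz => ?_⟩
  have hz' : z ∈ G.neighborSet x := hz
  rwa [hy] at hz'

lemma exists_forall_adj_of_deg_eq_three [Finite V] {G : SimpleGraph V} {u v v' : V}
    (h : deg G u = 3) (hv : G.Adj u v) (hv' : G.Adj u v') (hvv' : v ≠ v') :
    ∃ w, G.Adj u w ∧ w ≠ v ∧ w ≠ v' ∧ ∀ z, G.Adj u z → z = v ∨ z = v' ∨ z = w := by
  have hsub : {v, v'} ⊆ G.neighborSet u :=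
    Set.insert_subset hv (Set.singleton_subset_iff.mpr hv')
  obtain ⟨w, hw⟩ := Set.ncard_eq_one.mp (show (G.neighborSet u \ {v, v'}).ncard = 1 by
    rw [Set.ncard_sdiff hsub, Set.ncard_pair hvv', ← deg, h])
  have hw' : w ∈ G.neighborSet u \ {v, v'} := hw ▸ rfl
  simp only [Set.mem_sdiff, Set.mem_insert_iff, Set.mem_singleton_iff, not_or] at hw'
  refine ⟨w, hw'.1, hw'.2.1, hw'.2.2, fun z hz => ?_⟩
  by_cases hz' : z = v ∨ z = v'
  · tauto
  · have : z ∈ G.neighborSet u \ {v, v'} := ⟨hz, by simpa using hz'⟩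
    rw [hw] at this
    exact Or.inr (Or.inr this)

section DeleteEdge

variable {G : SimpleGraph V} {u v : V}

lemma adj_deleteEdges_iff {z : V} :
    (G.deleteEdges {s(u, v)}).Adj u z ↔ G.Adj u z ∧ z ≠ v := by
  rw [deleteEdges_adj, Set.mem_singleton_iff, Sym2.congr_right]

lemma deg_deleteEdges_left [Finite V] (h : G.Adj u v) :
    deg (G.deleteEdges {s(u, v)}) u = deg G u - 1 := by
  have : (G.deleteEdges {s(u, v)}).neighborSet u = G.neighborSet u \ {v} := by
    ext z
    exact adj_deleteEdges_iff
  rw [deg, this, Set.ncard_sdiff_singleton_of_mem (show v ∈ G.neighborSet u from h), deg]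

lemma deg_deleteEdges_right [Finite V] (h : G.Adj u v) :
    deg (G.deleteEdges {s(u, v)}) v = deg G v - 1 := by
  rw [Sym2.eq_swap]
  exact deg_deleteEdges_left h.symm

end DeleteEdge
section Kempe

def IsMissingColor (G : SimpleGraph V) (c : Sym2 V → ℕ) (x : V) (a : ℕ) : Prop :=
  ∀ y, G.Adj x y → c s(x, y) ≠ a

def kempeGraph (G : SimpleGraph V) (c : Sym2 V → ℕ) (a b : ℕ) : SimpleGraph V where
  Adj x y := G.Adj x y ∧ c s(x, y) ∈ ({a, b} : Set ℕ)
  symm := ⟨fun _ _ h => ⟨h.1.symm, by rw [Sym2.eq_swap]; exact h.2⟩⟩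
  loopless := ⟨fun x h => G.loopless.irrefl x h.1⟩

open Classical in
noncomputable def kempeSwap (c : Sym2 V → ℕ) (a b : ℕ) (S : Set V) (e : Sym2 V) : ℕ :=
  if ∃ x ∈ e, x ∈ S then Equiv.swap a b (c e) else c e

variable {G G' : SimpleGraph V} {c : Sym2 V → ℕ} {k a b : ℕ} {u v x : V} {S : Set V}

@[simp]
lemma kempeGraph_adj {y : V} :
    (kempeGraph G c a b).Adj x y ↔ G.Adj x y ∧ c s(x, y) ∈ ({a, b} : Set ℕ) :=
  Iff.rfl

lemma kempeGraph_le : kempeGraph G c a b ≤ G := fun _ _ h => h.1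

lemma kempeGraph_comm : kempeGraph G c a b = kempeGraph G c b a := by
  ext
  simp [Set.pair_comm]

lemma IsMissingColor.anti (h : IsMissingColor G c x a) (hle : G' ≤ G) :
    IsMissingColor G' c x a :=
  fun y hy => h y (hle hy)

lemma IsMissingColor.ne (h : IsMissingColor G c x a) {e : Sym2 V} (he : e ∈ G.edgeSet)
    (hx : x ∈ e) : c e ≠ a := by
  obtain ⟨y, rfl⟩ := Sym2.mem_iff_exists.mp hx
  exact h y he

lemma exists_isMissingColor_of_deg_add_deg_lt [Finite V] (c : Sym2 V → ℕ) {y : V}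
    (h : deg G x + deg G y < k) : ∃ a < k, IsMissingColor G c x a ∧ IsMissingColor G c y a := by
  set U := (fun z => c s(x, z)) '' G.neighborSet x ∪ (fun z => c s(y, z)) '' G.neighborSet y
  have hU : U.ncard < (Set.Iio k).ncard := by
    calc U.ncard ≤ deg G x + deg G y :=
          (Set.ncard_union_le _ _).trans (add_le_add (Set.ncard_image_le) (Set.ncard_image_le))
      _ < (Set.Iio k).ncard := by rwa [Set.ncard_Iio_nat]
  obtain ⟨a, ha, haU⟩ := Set.exists_mem_notMem_of_ncard_lt_ncard hU
  exact ⟨a, ha, fun z hz hza => haU (Or.inl ⟨z, hz, hza⟩),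
    fun z hz hza => haU (Or.inr ⟨z, hz, hza⟩)⟩

lemma IsProperEdgeColoring.update_of_isMissingColor [DecidableEq V]
    (hc : IsProperEdgeColoring (G.deleteEdges {s(u, v)}) k c) (ha : a < k)
    (hu : IsMissingColor (G.deleteEdges {s(u, v)}) c u a)
    (hv : IsMissingColor (G.deleteEdges {s(u, v)}) c v a) :
    IsProperEdgeColoring G k (Function.update c s(u, v) a) := by
  have hdel {e : Sym2 V} (he : e ∈ G.edgeSet) (hne : e ≠ s(u, v)) :
      e ∈ (G.deleteEdges {s(u, v)}).edgeSet := by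
    simp [edgeSet_deleteEdges, he, hne]
  have hmiss {e : Sym2 V} (he : e ∈ G.edgeSet) (hne : e ≠ s(u, v)) {p : V} (hp : p ∈ e)
      (hpuv : p ∈ s(u, v)) : c e ≠ a := by
    rcases Sym2.mem_iff.mp hpuv with rfl | rfl
    exacts [hu.ne (hdel he hne) hp, hv.ne (hdel he hne) hp]
  refine ⟨fun e he => ?_, fun e₁ he₁ e₂ he₂ hne ⟨p, hp₁, hp₂⟩ => ?_⟩
  · rcases eq_or_ne e s(u, v) with rfl | h
    · simpa using ha
    · simpa [h] using hc.1 e (hdel he h)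
  · rcases eq_or_ne e₁ s(u, v) with rfl | h₁ <;> rcases eq_or_ne e₂ s(u, v) with rfl | h₂
    · exact absurd rfl hne
    · simpa [h₂] using (hmiss he₂ h₂ hp₂ hp₁).symm
    · simpa [h₁] using hmiss he₁ h₁ hp₁ hp₂
    · simpa [h₁, h₂] using hc.2 e₁ (hdel he₁ h₁) e₂ (hdel he₂ h₂) hne ⟨p, hp₁, hp₂⟩

lemma IsProperEdgeColoring.shift [DecidableEq V] {v' : V}
    (hc : IsProperEdgeColoring (G.deleteEdges {s(u, v)}) k c)
    (huv' : (G.deleteEdges {s(u, v)}).Adj u v')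
    (hv : IsMissingColor (G.deleteEdges {s(u, v)}) c v (c s(u, v'))) :
    IsProperEdgeColoring (G.deleteEdges {s(u, v')}) k (Function.update c s(u, v) (c s(u, v'))) := by
  have hle : (G.deleteEdges {s(u, v')}).deleteEdges {s(u, v)} ≤ G.deleteEdges {s(u, v)} :=
    fun _ _ h => ⟨h.1.1, h.2⟩
  refine (hc.anti hle).update_of_isMissingColor (hc.1 _ huv')
    (fun z hz => hc.color_ne (hle hz) huv' ?_) (hv.anti hle)
  rintro rfl
  simp at hz

lemma kempeGraph_shift [DecidableEq V] {v' : V} (ha : c s(u, v') ≠ a) (hb : c s(u, v') ≠ b) :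
    kempeGraph (G.deleteEdges {s(u, v')}) (Function.update c s(u, v) (c s(u, v'))) a b =
      kempeGraph (G.deleteEdges {s(u, v)}) c a b := by
  ext p q
  simp only [kempeGraph_adj, deleteEdges_adj, Set.mem_singleton_iff, Function.update_apply]
  by_cases h₁ : s(p, q) = s(u, v) <;> by_cases h₂ : s(p, q) = s(u, v') <;>
    simp [h₁, h₂, ha, hb]

open Classical in
lemma kempeSwap_apply_of_mem (hS : ∀ x y, (kempeGraph G c a b).Adj x y → x ∈ S → y ∈ S)
    {e : Sym2 V} (he : e ∈ G.edgeSet) {p : V} (hp : p ∈ e) :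
    kempeSwap c a b S e = if p ∈ S then Equiv.swap a b (c e) else c e := by
  obtain ⟨q, rfl⟩ := Sym2.mem_iff_exists.mp hp
  by_cases hpS : p ∈ S
  · rw [kempeSwap, if_pos ⟨p, Sym2.mem_mk_left p q, hpS⟩, if_pos hpS]
  rw [kempeSwap, if_neg hpS]
  split_ifs with h
  · have hq : q ∈ S := by
      obtain ⟨y, hy, hyS⟩ := h
      rcases Sym2.mem_iff.mp hy with rfl | rfl
      exacts [absurd hyS hpS, hyS]
    have hcol : c s(p, q) ∉ ({a, b} : Set ℕ) :=
      fun hab => hpS (hS q p ⟨G.adj_symm he, Sym2.eq_swap (a := q) ▸ hab⟩ hq)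
    simp only [Set.mem_insert_iff, Set.mem_singleton_iff, not_or] at hcol
    exact Equiv.swap_apply_of_ne_of_ne hcol.1 hcol.2
  · rfl

lemma IsProperEdgeColoring.kempeSwap (hc : IsProperEdgeColoring G k c) (ha : a < k) (hb : b < k)
    (hS : ∀ x y, (kempeGraph G c a b).Adj x y → x ∈ S → y ∈ S) :
    IsProperEdgeColoring G k (kempeSwap c a b S) := by
  refine ⟨fun e he => ?_, fun e₁ he₁ e₂ he₂ hne ⟨p, hp₁, hp₂⟩ => ?_⟩
  · unfold _root_.kempeSwap
    split_ifs
    · rw [Equiv.swap_apply_def]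
      split_ifs
      exacts [hb, ha, hc.1 e he]
    · exact hc.1 e he
  · have hne' := hc.2 e₁ he₁ e₂ he₂ hne ⟨p, hp₁, hp₂⟩
    rw [kempeSwap_apply_of_mem hS he₁ hp₁, kempeSwap_apply_of_mem hS he₂ hp₂]
    split_ifs
    exacts [(Equiv.swap a b).injective.ne hne', hne']

open Classical in
lemma IsMissingColor.kempeSwap_of_notMem {a' b' : ℕ} (h : IsMissingColor G c x a)
    (hS : ∀ x y, (kempeGraph G c a' b').Adj x y → x ∈ S → y ∈ S) (hx : x ∉ S) :
    IsMissingColor G (kempeSwap c a' b' S) x a := fun y hy => by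
  rw [kempeSwap_apply_of_mem hS hy (Sym2.mem_mk_left x y), if_neg hx]
  exact h y hy

open Classical in
lemma IsMissingColor.kempeSwap_of_mem (h : IsMissingColor G c x b)
    (hS : ∀ x y, (kempeGraph G c a b).Adj x y → x ∈ S → y ∈ S) (hx : x ∈ S) :
    IsMissingColor G (kempeSwap c a b S) x a := fun y hy => by
  rw [kempeSwap_apply_of_mem hS hy (Sym2.mem_mk_left x y), if_pos hx, Ne,
    Equiv.swap_apply_eq_iff, Equiv.swap_apply_left]
  exact h y hy

lemma IsProperEdgeColoring.deg_kempeGraph_le_two (hc : IsProperEdgeColoring G k c) (x : V) :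
    deg (kempeGraph G c a b) x ≤ 2 :=
  ((hc.anti kempeGraph_le).deg_le_ncard (Set.toFinite _) fun _ hy => hy.2).trans <|
    (Set.ncard_insert_le a {b}).trans (by simp)

lemma IsProperEdgeColoring.deg_kempeGraph_le_one (hc : IsProperEdgeColoring G k c)
    (hx : IsMissingColor G c x a) : deg (kempeGraph G c a b) x ≤ 1 := by
  refine ((hc.anti kempeGraph_le).deg_le_ncard (Set.finite_singleton b) fun y hy => ?_).trans
    (by simp)
  rcases hy.2 with h | h
  exacts [absurd h (hx y hy.1), h]

lemma reachable_kempeGraph_of_isMissingColor (hk : k < edgeChromaticNumber G)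
    (hc : IsProperEdgeColoring (G.deleteEdges {s(u, v)}) k c) (ha : a < k) (hb : b < k)
    (hu : IsMissingColor (G.deleteEdges {s(u, v)}) c u a)
    (hv : IsMissingColor (G.deleteEdges {s(u, v)}) c v b) :
    (kempeGraph (G.deleteEdges {s(u, v)}) c a b).Reachable v u := by
  classical
  by_contra hvu
  set S := {x | (kempeGraph (G.deleteEdges {s(u, v)}) c a b).Reachable v x}
  have hS : ∀ x y, (kempeGraph (G.deleteEdges {s(u, v)}) c a b).Adj x y → x ∈ S → y ∈ S :=
    fun _ _ hxy hx => hx.trans hxy.reachable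
  have := ((hc.kempeSwap ha hb hS).update_of_isMissingColor ha
    (hu.kempeSwap_of_notMem hS hvu) (hv.kempeSwap_of_mem hS Reachable.rfl)).edgeChromaticNumber_le
  omega

lemma color_eq_and_reachable_of_forall_adj_eq (hk : k < edgeChromaticNumber G)
    (hc : IsProperEdgeColoring (G.deleteEdges {s(u, v)}) k c) (ha : a < k) (hb : b < k)
    (hab : a ≠ b) (hu : IsMissingColor (G.deleteEdges {s(u, v)}) c u a)
    (hx : ∀ z, (G.deleteEdges {s(u, v)}).Adj v z → z = x) :
    c s(v, x) = a ∧ (kempeGraph (G.deleteEdges {s(u, v)}) c a b).Reachable v u := by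
  classical
  have hvx : c s(v, x) = a := by
    by_contra hne
    have := (hc.update_of_isMissingColor ha hu fun z hz => hx z hz ▸ hne).edgeChromaticNumber_le
    omega
  refine ⟨hvx, reachable_kempeGraph_of_isMissingColor hk hc ha hb hu fun z hz => ?_⟩
  rw [hx z hz, hvx]
  exact hab

end Kempe

section Critical

variable [Finite V] {G : SimpleGraph V} {u v v' : V}

lemma IsCritical.exists_isProperEdgeColoring_deleteEdges (hG : IsCritical G) (huv : G.Adj u v) :
    ∃ c, IsProperEdgeColoring (G.deleteEdges {s(u, v)}) (edgeChromaticNumber G - 1) c := by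
  let H := (⊤ : G.Subgraph).deleteEdges {s(u, v)}
  have hH : H ≠ ⊤ := fun h => by
    have : H.Adj u v := h ▸ huv
    simp [H] at this
  have hspan : H.spanningCoe = G.deleteEdges {s(u, v)} := by
    ext
    simp [H]
  obtain ⟨c, hc⟩ := exists_isProperEdgeColoring_edgeChromaticNumber H.spanningCoe
  have := edgeChromaticNumber_spanningCoe_le H
  have := hG.2 H hH
  exact ⟨c, hspan ▸ hc.mono (by omega)⟩

lemma IsCritical.deg_ne_zero (hG : IsCritical G) (x : V) : deg G x ≠ 0 := by
  intro hx
  have hiso : ∀ y, ¬ G.Adj x y := fun y hy => by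
    rw [deg, Set.ncard_eq_zero] at hx
    exact hx.subset hy
  let H := (⊤ : G.Subgraph).deleteVerts {x}
  have hH : H ≠ ⊤ := fun h => by
    have : x ∈ H.verts := h ▸ trivial
    simp [H] at this
  have hspan : H.spanningCoe = G := by
    ext y z
    simp only [H, Subgraph.spanningCoe_adj, Subgraph.deleteVerts_adj, Subgraph.top_adj]
    refine ⟨fun h => h.2.2.2.2, fun h => ⟨trivial, ?_, trivial, ?_, h⟩⟩ <;> rintro rfl
    exacts [hiso z h, hiso y h.symm]
  have := edgeChromaticNumber_spanningCoe_le H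
  rw [hspan] at this
  exact absurd (hG.2 H hH) this.not_gt

lemma IsCritical.edgeChromaticNumber_lt_deg_add_deg (hG : IsCritical G) (huv : G.Adj u v) :
    edgeChromaticNumber G < deg G u + deg G v := by
  classical
  obtain ⟨c, hc⟩ := hG.exists_isProperEdgeColoring_deleteEdges huv
  by_contra! h
  have hu : 0 < deg G u := (Set.ncard_pos (Set.toFinite _)).mpr ⟨v, huv⟩
  have hv : 0 < deg G v := (Set.ncard_pos (Set.toFinite _)).mpr ⟨u, huv.symm⟩
  have := deg_le_edgeChromaticNumber G u
  obtain ⟨a, ha, hua, hva⟩ := exists_isMissingColor_of_deg_add_deg_lt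
    (k := edgeChromaticNumber G - 1) c (x := u) (y := v)
    (by rw [deg_deleteEdges_left huv, deg_deleteEdges_right huv]; omega)
  have := (hc.update_of_isMissingColor ha hua hva).edgeChromaticNumber_le
  omega

lemma IsCritical.eq_of_adj_of_deg_eq_two (hG : IsCritical G) (hχ : edgeChromaticNumber G = 4)
    (hu : deg G u = 3) (huv : G.Adj u v) (huv' : G.Adj u v') (hv : deg G v = 2)
    (hv' : deg G v' = 2) : v = v' := by
  classical
  by_contra hvv'
  set H := G.deleteEdges {s(u, v)}
  set H' := G.deleteEdges {s(u, v')}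
  obtain ⟨w, huw, hwv, hwv', hu3⟩ := exists_forall_adj_of_deg_eq_three hu huv huv' hvv'
  have hHuv' : H.Adj u v' := adj_deleteEdges_iff.mpr ⟨huv', Ne.symm hvv'⟩
  have hHuw : H.Adj u w := adj_deleteEdges_iff.mpr ⟨huw, hwv⟩
  have hHu : ∀ z, H.Adj u z → z = v' ∨ z = w := fun z hz =>
    (hu3 z (adj_deleteEdges_iff.mp hz).1).resolve_left (adj_deleteEdges_iff.mp hz).2
  have hH'u : ∀ z, H'.Adj u z → z = v ∨ z = w := fun z hz =>
    (hu3 z (adj_deleteEdges_iff.mp hz).1).imp_right (·.resolve_left (adj_deleteEdges_iff.mp hz).2)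
  obtain ⟨x, hx⟩ := exists_forall_adj_eq_of_deg_eq_one (G := H) (x := v)
    (by rw [deg_deleteEdges_right huv, hv])
  obtain ⟨y, hy⟩ := exists_forall_adj_eq_of_deg_eq_one (G := H') (x := v')
    (by rw [deg_deleteEdges_right huv', hv'])
  obtain ⟨c, hc⟩ : ∃ c, IsProperEdgeColoring H 3 c := by
    simpa [hχ] using hG.exists_isProperEdgeColoring_deleteEdges huv
  have hβ := hc.1 s(u, v') hHuv'
  have hγ := hc.1 s(u, w) hHuw
  have hβγ := hc.color_ne hHuv' hHuw hwv'.symm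
  set β := c s(u, v')
  set γ := c s(u, w)
  -- the third color, missing at `u`
  set α := 3 - β - γ
  have huα : IsMissingColor H c u α := fun z hz => by rcases hHu z hz with rfl | rfl <;> omega
  obtain ⟨hvx, hvu⟩ := color_eq_and_reachable_of_forall_adj_eq (b := γ) (by omega) hc
    (by omega) hγ (by omega) huα hx
  have hc' := hc.shift hHuv' fun z hz => by rw [hx z hz, hvx]; omega
  have huα' : IsMissingColor H' (Function.update c s(u, v) β) u α := fun z hz => by
    rcases hH'u z hz with rfl | rfl
    · simp only [Function.update_self]; omega
    · rw [Function.update_of_ne (by rw [Ne, Sym2.congr_right]; exact hwv)]; omega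
  obtain ⟨hv'y, hv'u⟩ := color_eq_and_reachable_of_forall_adj_eq (b := γ) (by omega) hc'
    (by omega) hγ (by omega) huα' hy
  have hK := kempeGraph_shift (G := G) (c := c) (u := u) (v := v) (v' := v') (a := α) (b := γ)
    (by omega) (by omega)
  refine false_of_reachable_of_deg_le_one hc.deg_kempeGraph_le_two huv.ne huv'.ne hvv' hvu
    (hK ▸ hv'u) (hc.deg_kempeGraph_le_one huα) ?_ ?_
  · rw [kempeGraph_comm]
    exact hc.deg_kempeGraph_le_one fun z hz => by rw [hx z hz, hvx]; omega
  · rw [← hK, kempeGraph_comm]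
    exact hc'.deg_kempeGraph_le_one fun z hz => by rw [hy z hz, hv'y]; omega

end Critical

lemma four_mul_card_le_three_mul_ncard_edgeSet [Fintype V] (G : SimpleGraph V)
    (hdeg : ∀ v, deg G v = 2 ∨ deg G v = 3)
    (hnbr : ∀ u v, G.Adj u v → deg G v = 2 → deg G u = 3)
    (huniq : ∀ u v v', G.Adj u v → G.Adj u v' → deg G v = 2 → deg G v' = 2 → v = v') :
    4 * Fintype.card V ≤ 3 * G.edgeSet.ncard := by
  classical
  set D₂ := Finset.univ.filter (deg G · = 2)
  set D₃ := Finset.univ.filter (deg G · ≠ 2)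
  have hcard : D₂.card + D₃.card = Fintype.card V :=
    Finset.card_filter_add_card_filter_not _
  have hsum : 2 * G.edgeSet.ncard = 2 * Fintype.card V + D₃.card := by
    rw [← sum_deg_eq_two_mul_ncard_edgeSet, ← Finset.card_univ, Finset.card_filter, mul_comm,
      ← smul_eq_mul, ← Finset.sum_const, ← Finset.sum_add_distrib]
    refine Finset.sum_congr rfl fun v _ => ?_
    rcases hdeg v with h | h <;> simp [h]
  have hD : D₂.card * 2 ≤ D₃.card * 1 := by
    refine Finset.card_mul_le_card_mul G.Adj (fun v hv => ?_) (fun u _ => ?_)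
    · have hv2 : deg G v = 2 := (Finset.mem_filter.mp hv).2
      have : (D₃.bipartiteAbove G.Adj v : Set V) = G.neighborSet v := by
        ext z
        simp only [Finset.mem_coe, Finset.mem_bipartiteAbove, D₃, Finset.mem_filter,
          Finset.mem_univ, true_and, mem_neighborSet, and_iff_right_iff_imp]
        intro h
        have := hnbr z v h.symm hv2
        omega
      rw [← Set.ncard_coe_finset, this]
      exact hv2.ge
    · refine Finset.card_le_one.mpr fun a ha b hb => ?_
      simp only [Finset.mem_bipartiteBelow, D₂, Finset.mem_filter, Finset.mem_univ, true_and]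
        at ha hb
      exact huniq u a b ha.2.symm hb.2.symm ha.1 hb.1
  omega

/-- If `G` is 3-critical, then `|E(G)| ≥ (4/3)·|V(G)|`. -/
theorem edge_bound_3critical [Fintype V] (G : SimpleGraph V)
    (hG : IsKCritical G 3) :
    (4 : ℚ) / 3 * Fintype.card V ≤ G.edgeSet.ncard := by
  obtain ⟨hcrit, hmax⟩ := hG
  have hdeg_le (v : V) : deg G v ≤ 3 := hmax ▸ deg_le_maxDeg G v
  have hχ : 4 ≤ edgeChromaticNumber G := by
    obtain ⟨v, hv⟩ := exists_deg_eq_maxDeg G (by omega)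
    have := deg_le_edgeChromaticNumber G v
    have := hcrit.1
    omega
  have hlt {u v : V} (huv : G.Adj u v) := hcrit.edgeChromaticNumber_lt_deg_add_deg huv
  suffices key : 4 * Fintype.card V ≤ 3 * G.edgeSet.ncard by
    have : (4 * Fintype.card V : ℚ) ≤ 3 * G.edgeSet.ncard := by exact_mod_cast key
    linarith
  refine four_mul_card_le_three_mul_ncard_edgeSet G (fun v => ?_) (fun u v huv hv => ?_)
    (fun u v v' huv huv' hv hv' => ?_)
  · obtain ⟨u, hu⟩ := Set.nonempty_of_ncard_ne_zero (hcrit.deg_ne_zero v)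
    have := hlt hu
    have := hdeg_le u
    have := hdeg_le v
    omega
  · have := hlt huv
    have := hdeg_le u
    omega
  · have := hlt huv
    have := hdeg_le u
    exact hcrit.eq_of_adj_of_deg_eq_two (by omega) (by omega) huv huv' hv hv'
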